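/- arXiv:1504.06726 — 6 statements merged into one kernel-verified Lean document; each statement's English description precedes it below -/
import Mathlib

section
/- For all integers g ≥ 3 and n ≥ g, there exists a loopless digraph on n vertices in which every directed cycle has length at least g and which contains at least one directed cycle of length exactly g (i.e., the digraph has digirth g), such that every acyclic set of vertices has size at most ⌈(n(g−2)+1)/(g−1)⌉. -/
/-- A directed cycle in the digraph with arc relation `A`: a map `c : Fin m → V`
with `m > 0`, pairwise distinct vertices, and an arc from each vertex to the
cyclically next one. -/
def IsDicycle {V : Type*} (A : V → V → Prop) {m : ℕ} (c : Fin m → V) : Prop :=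
  0 < m ∧ Function.Injective c ∧
    ∀ i j : Fin m, ((j : ℕ) = (i : ℕ) + 1 ∨ ((i : ℕ) = m - 1 ∧ (j : ℕ) = 0)) →
      A (c i) (c j)

/-- A set `S` of vertices is acyclic if the subgraph induced on `S` has no
directed cycle, i.e. the transitive closure of the restriction of `A` to `S`
is irreflexive. -/
def AcyclicSet {V : Type*} (A : V → V → Prop) (S : Set V) : Prop :=
  ∀ v : V, ¬ Relation.TransGen (fun a b => a ∈ S ∧ b ∈ S ∧ A a b) v v

namespace AcyclicCons

def Arc (b q n : ℕ) (x y : Fin n) : Prop :=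
  ((y : ℕ) = (x : ℕ) + 1 ∧ (y : ℕ) < q * b ∧ ¬ b ∣ (y : ℕ)) ∨
  (b ∣ ((x : ℕ) + 1) ∧ (x : ℕ) < q * b ∧ (x : ℕ) < (y : ℕ)) ∨
  (b ∣ (y : ℕ) ∧ (y : ℕ) < q * b ∧ (y : ℕ) + b ≤ (x : ℕ))

lemma exists_cycle (b q n g : ℕ) (hb : 2 ≤ b) (hq : 1 ≤ q) (hgb : b + 1 = g)
    (hn : g ≤ n) : ∃ c : Fin g → Fin n, IsDicycle (Arc b q n) c := by
  have hbq : b ≤ q * b := Nat.le_mul_of_pos_left b hq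
  have hkn : ∀ k : Fin g, (k : ℕ) < n := fun k => by have := k.2; omega
  refine ⟨fun k => ⟨(k : ℕ), hkn k⟩, by omega, ?_, ?_⟩
  · intro k1 k2 h
    have h2 := congrArg (fun z : Fin n => (z : ℕ)) h
    exact Fin.ext h2
  · intro i j hij
    have hi := i.2
    have hj := j.2
    rcases hij with h | ⟨h1, h2⟩
    · rcases Nat.lt_or_ge (j : ℕ) b with hlt | hge
      · left
        refine ⟨?_, ?_, fun hd => ?_⟩
        · show (j : ℕ) = (i : ℕ) + 1; exact h
        · show (j : ℕ) < q * b; omega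
        · have hd' : b ∣ (j : ℕ) := hd
          have := Nat.le_of_dvd (by omega) hd'
          omega
      · right; left
        refine ⟨?_, ?_, ?_⟩
        · show b ∣ (i : ℕ) + 1
          rw [show (i : ℕ) + 1 = b by omega]
        · show (i : ℕ) < q * b; omega
        · show (i : ℕ) < (j : ℕ); omega
    · right; right
      refine ⟨?_, ?_, ?_⟩
      · show b ∣ (j : ℕ); rw [h2]; exact dvd_zero b
      · show (j : ℕ) < q * b; rw [h2]; exact Nat.mul_pos (by omega) (by omega)
      · show (j : ℕ) + b ≤ (i : ℕ); omega

lemma acyclic_card (b q n : ℕ) (hb : 2 ≤ b) (hq : 1 ≤ q) (hqn : q * b + 1 ≤ n)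
    (S : Finset (Fin n)) (hS : AcyclicSet (Arc b q n) (↑S : Set (Fin n))) :
    S.card + q ≤ n := by
  classical
  have hlt : ∀ ℓ k, ℓ < q → k < b → ℓ * b + k < n := by
    intro ℓ k h1 h2
    have h3 : (ℓ + 1) * b ≤ q * b := Nat.mul_le_mul_right _ (by omega)
    have h4 : (ℓ + 1) * b = ℓ * b + b := by ring
    omega
  -- block property
  have hblock : ∀ ℓ (hℓ : ℓ < q),
      (∀ k (hk : k < b), (⟨ℓ * b + k, hlt ℓ k hℓ hk⟩ : Fin n) ∈ S) →
      ∀ y : Fin n, ℓ * b + b ≤ (y : ℕ) → y ∉ S := by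
    intro ℓ hℓ hall y hy hyS
    have hx0lt : ℓ * b + 0 < n := hlt ℓ 0 hℓ (by omega)
    have hbub : (ℓ + 1) * b ≤ q * b := Nat.mul_le_mul_right _ (by omega)
    have hbe : (ℓ + 1) * b = ℓ * b + b := by ring
    have hdl : b ∣ ℓ * b := dvd_mul_left b ℓ
    set R' : Fin n → Fin n → Prop :=
      fun a b' => a ∈ (↑S : Set (Fin n)) ∧ b' ∈ (↑S : Set (Fin n)) ∧ Arc b q n a b' with hR'
    have chain : ∀ k, k ≤ b - 1 →
        Relation.TransGen R' ⟨ℓ * b + (b - 1 - k), hlt ℓ _ hℓ (by omega)⟩ ⟨ℓ * b + 0, hx0lt⟩ := by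
      intro k hk
      induction k with
      | zero =>
        refine Relation.TransGen.head (b := y) ⟨?_, ?_, ?_⟩
          (Relation.TransGen.single ⟨?_, ?_, ?_⟩)
        · exact Finset.mem_coe.mpr (hall (b - 1 - 0) (by omega))
        · exact Finset.mem_coe.mpr hyS
        · right; left
          refine ⟨?_, ?_, ?_⟩
          · show b ∣ ℓ * b + (b - 1 - 0) + 1
            rw [show ℓ * b + (b - 1 - 0) + 1 = (ℓ + 1) * b by omega]
            exact dvd_mul_left b (ℓ + 1)
          · show ℓ * b + (b - 1 - 0) < q * b
            omega
          · show ℓ * b + (b - 1 - 0) < (y : ℕ)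
            omega
        · exact Finset.mem_coe.mpr hyS
        · exact Finset.mem_coe.mpr (hall 0 (by omega))
        · right; right
          refine ⟨?_, ?_, ?_⟩
          · show b ∣ ℓ * b + 0
            simpa using hdl
          · show ℓ * b + 0 < q * b
            omega
          · show ℓ * b + 0 + b ≤ (y : ℕ)
            omega
      | succ k ih =>
        refine Relation.TransGen.head ⟨?_, ?_, ?_⟩ (ih (by omega))
        · exact Finset.mem_coe.mpr (hall (b - 1 - (k + 1)) (by omega))
        · exact Finset.mem_coe.mpr (hall (b - 1 - k) (by omega))
        · left
          refine ⟨?_, ?_, fun hd => ?_⟩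
          · show ℓ * b + (b - 1 - k) = ℓ * b + (b - 1 - (k + 1)) + 1
            omega
          · show ℓ * b + (b - 1 - k) < q * b
            omega
          · have hd' : b ∣ ℓ * b + (b - 1 - k) := hd
            have hdt : b ∣ (b - 1 - k) := (Nat.dvd_add_right hdl).mp hd'
            have := Nat.le_of_dvd (by omega) hdt
            omega
    have hloop := chain (b - 1) le_rfl
    have hEq : (⟨ℓ * b + (b - 1 - (b - 1)), hlt ℓ _ hℓ (by omega)⟩ : Fin n)
        = ⟨ℓ * b + 0, hx0lt⟩ := by
      apply Fin.ext
      show ℓ * b + (b - 1 - (b - 1)) = ℓ * b + 0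
      omega
    rw [hEq] at hloop
    exact hS _ hloop
  by_cases hA : ∀ ℓ, ℓ < q → ∃ x : Fin n, x ∉ S ∧ ℓ * b ≤ (x : ℕ) ∧ (x : ℕ) < ℓ * b + b
  · -- one missing vertex per block
    set pick : Fin q → Fin n := fun ℓ => (hA (ℓ : ℕ) ℓ.2).choose with hpickdef
    have hpick : ∀ ℓ : Fin q, pick ℓ ∉ S ∧ (ℓ : ℕ) * b ≤ (pick ℓ : ℕ) ∧
        (pick ℓ : ℕ) < (ℓ : ℕ) * b + b := fun ℓ => (hA (ℓ : ℕ) ℓ.2).choose_spec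
    have hpinj : Function.Injective pick := by
      intro a c h
      obtain ⟨-, ha1, ha2⟩ := hpick a
      obtain ⟨-, hc1, hc2⟩ := hpick c
      rw [h] at ha1 ha2
      apply Fin.ext
      rcases lt_trichotomy (a : ℕ) (c : ℕ) with hlt' | heq | hgt
      · have h6 : ((a : ℕ) + 1) * b ≤ (c : ℕ) * b := Nat.mul_le_mul_right _ (by omega)
        have h7 : ((a : ℕ) + 1) * b = (a : ℕ) * b + b := by ring
        omega
      · exact heq
      · have h6 : ((c : ℕ) + 1) * b ≤ (a : ℕ) * b := Nat.mul_le_mul_right _ (by omega)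
        have h7 : ((c : ℕ) + 1) * b = (c : ℕ) * b + b := by ring
        omega
    set M : Finset (Fin n) := Finset.image pick Finset.univ with hMdef
    have hMcard : M.card = q := by
      rw [hMdef, Finset.card_image_of_injective _ hpinj, Finset.card_univ, Fintype.card_fin]
    have hdis : Disjoint M S := by
      rw [Finset.disjoint_left]
      intro x hx hxS
      rw [hMdef, Finset.mem_image] at hx
      obtain ⟨ℓ, -, rfl⟩ := hx
      exact (hpick ℓ).1 hxS
    have hcu := Finset.card_union_of_disjoint hdis
    have h8 : (M ∪ S).card ≤ n := by
      calc (M ∪ S).card ≤ (Finset.univ : Finset (Fin n)).card := Finset.card_le_univ _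
      _ = n := by simp
    omega
  · push_neg at hA
    obtain ⟨ℓ1, hℓ1q, hℓ1⟩ := hA
    have hEx : ∃ ℓ, ℓ < q ∧ ∀ x : Fin n, x ∉ S → ℓ * b ≤ (x : ℕ) → ℓ * b + b ≤ (x : ℕ) :=
      ⟨ℓ1, hℓ1q, hℓ1⟩
    have hspec := Nat.find_spec hEx
    have hminP := fun ℓ' (h : ℓ' < Nat.find hEx) => Nat.find_min hEx h
    set ℓ₀ := Nat.find hEx with hl0def
    obtain ⟨hℓ₀q, hfull₀⟩ := hspec
    have hmiss : ∀ ℓ', ℓ' < ℓ₀ → ∃ x : Fin n, x ∉ S ∧ ℓ' * b ≤ (x : ℕ) ∧ (x : ℕ) < ℓ' * b + b := by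
      intro ℓ' hℓ'
      have hnp := hminP ℓ' hℓ'
      push_neg at hnp
      obtain ⟨x, h1, h2, h3⟩ := hnp (by omega)
      exact ⟨x, h1, h2, h3⟩
    have hblockmem : ∀ k (hk : k < b), (⟨ℓ₀ * b + k, hlt ℓ₀ k hℓ₀q hk⟩ : Fin n) ∈ S := by
      intro k hk
      by_contra hcon
      have h1 := hfull₀ _ hcon (by show ℓ₀ * b ≤ ℓ₀ * b + k; omega)
      have h2 : ℓ₀ * b + b ≤ ℓ₀ * b + k := h1
      omega
    have habove : ∀ y : Fin n, ℓ₀ * b + b ≤ (y : ℕ) → y ∉ S :=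
      hblock ℓ₀ hℓ₀q hblockmem
    have hSsmall : ∀ x : Fin n, x ∈ S → (x : ℕ) < ℓ₀ * b + b := by
      intro x hx
      by_contra hcon
      exact habove x (by omega) hx
    set pick' : Fin ℓ₀ → Fin n := fun ℓ => (hmiss (ℓ : ℕ) ℓ.2).choose with hpick'def
    have hpick' : ∀ ℓ : Fin ℓ₀, pick' ℓ ∉ S ∧ (ℓ : ℕ) * b ≤ (pick' ℓ : ℕ) ∧
        (pick' ℓ : ℕ) < (ℓ : ℕ) * b + b := fun ℓ => (hmiss (ℓ : ℕ) ℓ.2).choose_spec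
    have hpinj' : Function.Injective pick' := by
      intro a c h
      obtain ⟨-, ha1, ha2⟩ := hpick' a
      obtain ⟨-, hc1, hc2⟩ := hpick' c
      rw [h] at ha1 ha2
      apply Fin.ext
      rcases lt_trichotomy (a : ℕ) (c : ℕ) with hlt' | heq | hgt
      · have h6 : ((a : ℕ) + 1) * b ≤ (c : ℕ) * b := Nat.mul_le_mul_right _ (by omega)
        have h7 : ((a : ℕ) + 1) * b = (a : ℕ) * b + b := by ring
        omega
      · exact heq
      · have h6 : ((c : ℕ) + 1) * b ≤ (a : ℕ) * b := Nat.mul_le_mul_right _ (by omega)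
        have h7 : ((c : ℕ) + 1) * b = (c : ℕ) * b + b := by ring
        omega
    set M : Finset (Fin n) := Finset.image pick' Finset.univ with hMdef
    have hMcard : M.card = ℓ₀ := by
      rw [hMdef, Finset.card_image_of_injective _ hpinj', Finset.card_univ, Fintype.card_fin]
    have hdis : Disjoint M S := by
      rw [Finset.disjoint_left]
      intro x hx hxS
      rw [hMdef, Finset.mem_image] at hx
      obtain ⟨ℓ, -, rfl⟩ := hx
      exact (hpick' ℓ).1 hxS
    have hMsmall : ∀ x : Fin n, x ∈ M → (x : ℕ) < ℓ₀ * b + b := by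
      intro x hx
      rw [hMdef, Finset.mem_image] at hx
      obtain ⟨ℓ, -, rfl⟩ := hx
      obtain ⟨-, -, h2⟩ := hpick' ℓ
      have h6 : ((ℓ : ℕ) + 1) * b ≤ ℓ₀ * b := Nat.mul_le_mul_right _ (by omega)
      have h7 : ((ℓ : ℕ) + 1) * b = (ℓ : ℕ) * b + b := by ring
      omega
    have hcard1 : (M ∪ S).card ≤ ℓ₀ * b + b := by
      have h9 := Finset.card_le_card_of_injOn (fun x : Fin n => (x : ℕ))
        (s := M ∪ S) (t := Finset.range (ℓ₀ * b + b))
        (fun x hx => by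
          rw [Finset.mem_coe, Finset.mem_range]
          rcases Finset.mem_union.mp hx with h | h
          · exact hMsmall x h
          · exact hSsmall x h)
        (fun x _ y _ h => Fin.ext h)
      simpa using h9
    have hcard2 := Finset.card_union_of_disjoint hdis
    have e1 : (ℓ₀ + 1) * b = ℓ₀ * b + b := by ring
    have e2 : (ℓ₀ + 1 + (q - ℓ₀ - 1)) * b = (ℓ₀ + 1) * b + (q - ℓ₀ - 1) * b := by ring
    have e3 : ℓ₀ + 1 + (q - ℓ₀ - 1) = q := by omega
    have e4 : (q - ℓ₀ - 1) * 2 ≤ (q - ℓ₀ - 1) * b := Nat.mul_le_mul_left _ hb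
    rw [e3] at e2
    omega

lemma arc_irrefl (b q n : ℕ) (hb : 2 ≤ b) : Irreflexive (Arc b q n) := by
  intro x h
  rcases h with ⟨h1, _, _⟩ | ⟨_, _, h3⟩ | ⟨_, _, h3⟩ <;> omega

lemma girth (b q n m : ℕ) (hb : 2 ≤ b) (c : Fin m → Fin n)
    (hc : IsDicycle (Arc b q n) c) : b + 1 ≤ m := by
  classical
  obtain ⟨hm, hinj, harc⟩ := hc
  -- rule out m = 1
  have hm2 : 2 ≤ m := by
    by_contra hcon
    have hm1 : m = 1 := by omega
    have := harc ⟨0, hm⟩ ⟨0, hm⟩ (Or.inr ⟨by simp [hm1], rfl⟩)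
    exact arc_irrefl b q n hb _ this
  -- successor
  set nxt : Fin m → Fin m := fun i => ⟨((i : ℕ) + 1) % m, Nat.mod_lt _ hm⟩ with hnxtdef
  have hnxt : ∀ i : Fin m, Arc b q n (c i) (c (nxt i)) := by
    intro i
    apply harc
    rcases Nat.lt_or_ge ((i : ℕ) + 1) m with h | h
    · left
      simp [hnxtdef, Nat.mod_eq_of_lt h]
    · right
      have hi1 : (i : ℕ) + 1 = m := by omega
      refine ⟨by omega, ?_⟩
      simp [hnxtdef, hi1]
  -- minimum vertex
  obtain ⟨i₀, -, hmin0⟩ := Finset.exists_min_image (Finset.univ : Finset (Fin m))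
    (fun i => ((c i : Fin n) : ℕ)) ⟨⟨0, hm⟩, Finset.mem_univ _⟩
  have hmin : ∀ i : Fin m, ((c i₀ : Fin n) : ℕ) ≤ ((c i : Fin n) : ℕ) :=
    fun i => hmin0 i (Finset.mem_univ _)
  set v : ℕ := ((c i₀ : Fin n) : ℕ) with hvdef
  -- predecessor of i₀
  have hpred : ∃ p : Fin m, nxt p = i₀ ∧ p ≠ i₀ := by
    by_cases h0 : (i₀ : ℕ) = 0
    · refine ⟨⟨m - 1, by omega⟩, ?_, ?_⟩
      · apply Fin.ext
        simp [hnxtdef]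
        rw [show m - 1 + 1 = m by omega]
        simp [Nat.mod_self, h0]
      · intro h
        have := congrArg Fin.val h
        simp at this
        omega
    · refine ⟨⟨(i₀ : ℕ) - 1, by omega⟩, ?_, ?_⟩
      · apply Fin.ext
        simp [hnxtdef]
        rw [show (i₀ : ℕ) - 1 + 1 = (i₀ : ℕ) by omega]
        exact Nat.mod_eq_of_lt i₀.2
      · intro h
        have := congrArg Fin.val h
        simp at this
        omega
  obtain ⟨p, hp, hpne⟩ := hpred
  have hcpv : v < ((c p : Fin n) : ℕ) := by
    have h1 := hmin p
    have h2 : c p ≠ c i₀ := fun h => hpne (hinj h)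
    have h3 : ((c p : Fin n) : ℕ) ≠ v := fun h => h2 (Fin.ext h)
    omega
  have harc_in : Arc b q n (c p) (c i₀) := by
    have := hnxt p
    rwa [hp] at this
  have hdvd : b ∣ v := by
    rcases harc_in with ⟨h1, _, _⟩ | ⟨_, _, h3⟩ | ⟨h1, _, _⟩ <;> first | omega | exact h1
  -- march upward
  have march : ∀ k, k ≤ b - 1 → ∃ i : Fin m, ((c i : Fin n) : ℕ) = v + k := by
    intro k hk
    induction k with
    | zero => exact ⟨i₀, by omega⟩
    | succ k ih =>
      obtain ⟨i, hi⟩ := ih (by omega)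
      have ha := hnxt i
      have hge : v ≤ ((c (nxt i) : Fin n) : ℕ) := hmin _
      rcases ha with ⟨h1, _, _⟩ | ⟨h1, _, _⟩ | ⟨h1, _, h3⟩
      · exact ⟨nxt i, by omega⟩
      · exfalso
        rw [hi] at h1
        have hdk : b ∣ (k + 1) := by
          have : v + k + 1 = v + (k + 1) := by omega
          rw [this] at h1
          exact (Nat.dvd_add_right hdvd).mp h1
        have := Nat.le_of_dvd (by omega) hdk
        omega
      · exfalso
        rw [hi] at h3
        omega
  obtain ⟨iL, hiL⟩ := march (b - 1) le_rfl
  have hgeL : v ≤ ((c (nxt iL) : Fin n) : ℕ) := hmin _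
  have hwb : v + b ≤ ((c (nxt iL) : Fin n) : ℕ) := by
    rcases hnxt iL with ⟨h1, _, h3⟩ | ⟨_, _, h3⟩ | ⟨h1, _, h3⟩
    · exfalso
      apply h3
      rw [h1, hiL, show v + (b - 1) + 1 = v + b by omega]
      exact hdvd.add dvd_rfl
    · rw [hiL] at h3; omega
    · exfalso
      rw [hiL] at h3
      omega
  -- build an injection Fin (b+1) → Fin m
  have hEach : ∀ k : Fin (b + 1), ∃ i : Fin m,
      ((c i : Fin n) : ℕ) = if (k : ℕ) ≤ b - 1 then v + (k : ℕ) else ((c (nxt iL) : Fin n) : ℕ) := by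
    intro k
    by_cases h : (k : ℕ) ≤ b - 1
    · obtain ⟨i, hi⟩ := march (k : ℕ) h
      exact ⟨i, by simp [h, hi]⟩
    · exact ⟨nxt iL, by simp [h]⟩
  choose F hF using hEach
  have hFinj : Function.Injective F := by
    intro k1 k2 h
    have h1 := hF k1
    have h2 := hF k2
    rw [h] at h1
    rw [h1] at h2
    have hk1 := k1.2
    have hk2 := k2.2
    apply Fin.ext
    by_cases c1 : (k1 : ℕ) ≤ b - 1 <;> by_cases c2 : (k2 : ℕ) ≤ b - 1 <;>
      simp [c1, c2] at h2 <;> omega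
  calc b + 1 = Fintype.card (Fin (b + 1)) := by simp
  _ ≤ Fintype.card (Fin m) := Fintype.card_le_of_injective F hFinj
  _ = m := by simp

end AcyclicCons

/-- For all `g ≥ 3` and `n ≥ g` there is a loopless digraph on `n` vertices of
digirth `g` whose every acyclic set has size at most `⌈(n(g-2)+1)/(g-1)⌉`. -/
theorem acyclic_set_upper_bound (g n : ℕ) (hg : 3 ≤ g) (hn : g ≤ n) :
    ∃ (V : Type) (instV : Fintype V) (A : V → V → Prop),
      @Fintype.card V instV = n ∧
      Irreflexive A ∧
      (∀ (m : ℕ) (c : Fin m → V), IsDicycle A c → g ≤ m) ∧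
      (∃ c : Fin g → V, IsDicycle A c) ∧
      (∀ S : Finset V, AcyclicSet A (↑S : Set V) →
        (S.card : ℤ) ≤ ⌈((n : ℚ) * ((g : ℚ) - 2) + 1) / ((g : ℚ) - 1)⌉) := by
  classical
  obtain ⟨b, hbdef⟩ : ∃ b, b = g - 1 := ⟨_, rfl⟩
  have hb : 2 ≤ b := by omega
  obtain ⟨q, hq1, hqn, hub⟩ : ∃ q, 1 ≤ q ∧ q * b + 1 ≤ n ∧ n ≤ q * b + b := by
    have hmod := Nat.div_add_mod (n - 1) b
    have hmodlt : (n - 1) % b < b := Nat.mod_lt _ (by omega)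
    have hcomm : ((n - 1) / b) * b = b * ((n - 1) / b) := Nat.mul_comm _ _
    have hq1 : 1 ≤ (n - 1) / b := (Nat.one_le_div_iff (by omega)).mpr (by omega)
    exact ⟨(n - 1) / b, hq1, by omega, by omega⟩
  refine ⟨Fin n, inferInstance, AcyclicCons.Arc b q n, by simp, ?_, ?_, ?_, ?_⟩
  · exact AcyclicCons.arc_irrefl b q n hb
  · intro m c hc
    have := AcyclicCons.girth b q n m hb c hc
    omega
  · exact AcyclicCons.exists_cycle b q n g hb hq1 (by omega) hn
  · intro S hS
    have h1 := AcyclicCons.acyclic_card b q n hb hq1 hqn S hS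
    have hlt2 : ((S.card : ℤ) - 1 : ℤ) < ⌈((n : ℚ) * ((g : ℚ) - 2) + 1) / ((g : ℚ) - 1)⌉ := by
      rw [Int.lt_ceil]
      have hg3 : (3 : ℚ) ≤ (g : ℚ) := by exact_mod_cast hg
      rw [lt_div_iff₀ (by linarith)]
      have hc1 : (S.card : ℚ) + (q : ℚ) ≤ (n : ℚ) := by exact_mod_cast h1
      have hbq : ((b : ℕ) : ℚ) = (g : ℚ) - 1 := by
        rw [hbdef]
        push_cast [Nat.cast_sub (by omega : 1 ≤ g)]
        ring
      have hc2 : (n : ℚ) ≤ (q : ℚ) * ((g : ℚ) - 1) + ((g : ℚ) - 1) := by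
        have h5 : ((n : ℕ) : ℚ) ≤ ((q * b + b : ℕ) : ℚ) := by exact_mod_cast hub
        push_cast at h5
        rw [hbq] at h5
        linarith
      have hq0 : (0 : ℚ) ≤ (q : ℚ) := by positivity
      push_cast
      nlinarith [mul_le_mul_of_nonneg_right
        (show (S.card : ℚ) ≤ (n : ℚ) - (q : ℚ) by linarith)
        (show (0 : ℚ) ≤ (g : ℚ) - 1 by linarith)]
    omega
end

section
/- For all integers g ≥ 3 and f ≥ 1, there exists a loopless digraph on exactly f(g−1)+1 vertices which has digirth g (every directed cycle has length at least g, and some directed cycle has length exactly g) and whose minimum feedback vertex set has size exactly f: there is a feedback vertex set of size f, and every feedback vertex set has size at least f. -/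
/-- A feedback vertex set is a set of vertices whose complement is acyclic. -/
def FeedbackVertexSet {V : Type*} (A : V → V → Prop) (F : Set V) : Prop :=
  AcyclicSet A Fᶜ

/-- For all `g ≥ 3` and `f ≥ 1` there is a loopless digraph on `f(g-1)+1`
vertices with digirth `g` whose minimum feedback vertex set has size exactly
`f`. -/
theorem exists_digraph_min_feedback (g f : ℕ) (hg : 3 ≤ g) (hf : 1 ≤ f) :
    ∃ (V : Type) (instV : Fintype V) (A : V → V → Prop),
      @Fintype.card V instV = f * (g - 1) + 1 ∧
      Irreflexive A ∧
      (∀ (m : ℕ) (c : Fin m → V), IsDicycle A c → g ≤ m) ∧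
      (∃ c : Fin g → V, IsDicycle A c) ∧
      (∃ F : Finset V, FeedbackVertexSet A (↑F : Set V) ∧ F.card = f) ∧
      (∀ F : Finset V, FeedbackVertexSet A (↑F : Set V) → f ≤ F.card) := by
  set n := f * (g - 1) + 1 with hn
  haveI : NeZero n := ⟨by omega⟩
  have hfle : f ≤ f * (g - 1) := Nat.le_mul_of_pos_right f (by omega)
  have hfn : f < n := by omega
  set A : ZMod n → ZMod n → Prop := fun a b => 1 ≤ (b - a).val ∧ (b - a).val ≤ f with hA
  refine ⟨ZMod n, inferInstance, A, ZMod.card n, ?_, ?_, ?_, ?_, ?_⟩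
  · -- irreflexive
    rintro a ⟨h1, _⟩
    simp [ZMod.val_zero] at h1
  · -- digirth ≥ g
    rintro m c ⟨hm, hinj, harc⟩
    obtain ⟨m', rfl⟩ : ∃ m', m = m' + 1 := ⟨m - 1, by omega⟩
    have harc' : ∀ i : Fin (m' + 1), 1 ≤ (c (i+1) - c i).val ∧ (c (i+1) - c i).val ≤ f := by
      intro i
      apply harc
      rcases eq_or_ne i (Fin.last m') with h | h
      · right
        constructor
        · simp [h]
        · simp [Fin.val_add_one, h]
      · left; simp [Fin.val_add_one, h]
    set S := ∑ i : Fin (m' + 1), (c (i+1) - c i).val with hS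
    have hcast : ((S : ℕ) : ZMod n) = 0 := by
      push_cast [hS]
      simp only [ZMod.natCast_zmod_val]
      rw [Finset.sum_sub_distrib]
      have hre : ∑ x : Fin (m'+1), c (x + 1) = ∑ x : Fin (m'+1), c x :=
        Fintype.sum_equiv (Equiv.addRight (1 : Fin (m'+1))) _ _ (fun i => rfl)
      rw [hre, sub_self]
    have hdvd : n ∣ S := (ZMod.natCast_eq_zero_iff S n).mp hcast
    have hS1 : m' + 1 ≤ S := by
      calc m' + 1 = ∑ _i : Fin (m' + 1), 1 := by simp
        _ ≤ S := Finset.sum_le_sum (fun i _ => (harc' i).1)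
    have hS2 : S ≤ (m' + 1) * f := by
      calc S ≤ ∑ _i : Fin (m' + 1), f := Finset.sum_le_sum (fun i _ => (harc' i).2)
        _ = (m' + 1) * f := by simp [Finset.sum_const, Finset.card_univ, mul_comm]
    have hnS : n ≤ S := Nat.le_of_dvd (by omega) hdvd
    by_contra hlt
    push_neg at hlt
    have h1 : (m' + 1) * f ≤ (g - 1) * f := Nat.mul_le_mul_right f (by omega)
    have h2 : n ≤ (g - 1) * f := le_trans (le_trans hnS hS2) h1
    rw [hn, mul_comm f (g - 1)] at h2
    omega
  · -- cycle of length g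
    set c : Fin g → ZMod n := fun i => ((i.val * f : ℕ) : ZMod n) with hc
    refine ⟨c, by omega, ?_, ?_⟩
    · intro i j hij
      have hgi : i.val ≤ g - 1 := by omega
      have hgj : j.val ≤ g - 1 := by omega
      have hi : i.val * f < n := by
        have := Nat.mul_le_mul_right f hgi
        rw [hn, mul_comm f (g - 1)]; omega
      have hj : j.val * f < n := by
        have := Nat.mul_le_mul_right f hgj
        rw [hn, mul_comm f (g - 1)]; omega
      have hv := congrArg ZMod.val hij
      rw [hc] at hv
      simp only [ZMod.val_cast_of_lt hi, ZMod.val_cast_of_lt hj] at hv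
      exact Fin.ext (Nat.eq_of_mul_eq_mul_right (by omega) hv)
    · intro i j hcase
      rcases hcase with h | ⟨hi, hj⟩
      · have heq : c j - c i = ((f : ℕ) : ZMod n) := by
          rw [hc]; simp only []; rw [h]; push_cast; ring
        show 1 ≤ (c j - c i).val ∧ (c j - c i).val ≤ f
        rw [heq, ZMod.val_cast_of_lt hfn]
        omega
      · have hne : (g - 1) * f = n - 1 := by rw [hn, mul_comm]; omega
        have heq : c j - c i = ((1 : ℕ) : ZMod n) := by
          rw [hc]; simp only []; rw [hi, hj, hne]
          have h0 : ((n : ℕ) : ZMod n) = 0 := ZMod.natCast_self n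
          rw [Nat.cast_sub (by omega : 1 ≤ n), h0]
          push_cast
          ring
        show 1 ≤ (c j - c i).val ∧ (c j - c i).val ≤ f
        rw [heq, ZMod.val_cast_of_lt (by omega : 1 < n)]
        omega
  · -- FVS of size f
    set F : Finset (ZMod n) := (Finset.Ico (n - f) n).image (Nat.cast : ℕ → ZMod n) with hF
    have hmem : ∀ w : ZMod n, w ∈ F ↔ n - f ≤ w.val := by
      intro w
      constructor
      · rintro hw
        obtain ⟨k, hk, rfl⟩ := Finset.mem_image.mp hw
        rw [Finset.mem_Ico] at hk
        rw [ZMod.val_cast_of_lt hk.2]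
        exact hk.1
      · intro hw
        exact Finset.mem_image.mpr ⟨w.val, Finset.mem_Ico.mpr ⟨hw, ZMod.val_lt w⟩,
          ZMod.natCast_zmod_val w⟩
    refine ⟨F, ?_, ?_⟩
    · intro v hv
      have hmono : ∀ a b : ZMod n,
          (a ∈ (↑F : Set (ZMod n))ᶜ ∧ b ∈ (↑F : Set (ZMod n))ᶜ ∧ A a b) → a.val < b.val := by
        rintro a b ⟨ha, hb, h1, h2⟩
        simp only [Set.mem_compl_iff, Finset.mem_coe, hmem] at ha hb
        push_neg at ha hb
        have hab : b = a + (b - a) := by ring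
        have : b.val = (a.val + (b - a).val) % n := by
          conv_lhs => rw [hab]
          exact ZMod.val_add a (b - a)
        rw [Nat.mod_eq_of_lt (by omega)] at this
        omega
      have htg := Relation.TransGen.mono hmono v v hv
      have htr : Relation.TransGen (fun a b : ZMod n => a.val < b.val)
          = fun a b : ZMod n => a.val < b.val :=
        by
          haveI : IsTrans (ZMod n) (fun a b : ZMod n => a.val < b.val) :=
            ⟨fun a b c hab hbc => lt_trans hab hbc⟩
          exact Relation.transGen_eq_self
      rw [htr] at htg
      exact lt_irrefl _ htg
    · rw [hF, Finset.card_image_of_injOn, Nat.card_Ico]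
      · omega
      · intro a ha b hb hab
        rw [Finset.coe_Ico, Set.mem_Ico] at ha hb
        have := congrArg ZMod.val hab
        rwa [ZMod.val_cast_of_lt ha.2, ZMod.val_cast_of_lt hb.2] at this
  · -- every FVS has ≥ f vertices
    intro F hFvs
    by_contra hlt
    push_neg at hlt
    -- key: from any v ∉ F there is w ∉ F with A v w
    have key : ∀ v : ZMod n, v ∉ F → ∃ w : ZMod n, w ∉ F ∧ A v w := by
      intro v hv
      set T : Finset (ZMod n) := (Finset.Icc 1 f).image (fun s : ℕ => v + (s : ZMod n)) with hT
      have hTcard : T.card = f := by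
        rw [hT, Finset.card_image_of_injOn, Nat.card_Icc]
        · omega
        · intro a ha b hb hab
          rw [Finset.coe_Icc, Set.mem_Icc] at ha hb
          have hcc : ((a : ℕ) : ZMod n) = ((b : ℕ) : ZMod n) := add_left_cancel hab
          have hv2 := congrArg ZMod.val hcc
          rwa [ZMod.val_cast_of_lt (by omega), ZMod.val_cast_of_lt (by omega)] at hv2
      have hsub : ¬ T ⊆ F := fun hsub => absurd (Finset.card_le_card hsub) (by omega)
      obtain ⟨w, hwT, hwF⟩ := Finset.not_subset.mp hsub
      obtain ⟨s, hs, rfl⟩ := Finset.mem_image.mp hwT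
      rw [Finset.mem_Icc] at hs
      refine ⟨v + (s : ZMod n), hwF, ?_⟩
      have hvv : v + ((s : ℕ) : ZMod n) - v = ((s : ℕ) : ZMod n) := by ring
      show 1 ≤ (v + ((s : ℕ) : ZMod n) - v).val ∧ (v + ((s : ℕ) : ZMod n) - v).val ≤ f
      rw [hvv, ZMod.val_cast_of_lt (by omega)]
      omega
    -- starting vertex outside F
    have hv0 : ∃ v0 : ZMod n, v0 ∉ F := by
      by_contra hall
      push_neg at hall
      have : Finset.univ ⊆ F := fun x _ => hall x
      have := Finset.card_le_card this
      rw [Finset.card_univ, ZMod.card n] at this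
      omega
    obtain ⟨v0, hv0⟩ := hv0
    -- iterate
    set st : ZMod n → ZMod n := fun v =>
      if h : v ∉ F then Classical.choose (key v h) else v with hst
    have hstp : ∀ v (h : v ∉ F), st v ∉ F ∧ A v (st v) := by
      intro v h
      simp only [hst, dif_pos h]
      exact Classical.choose_spec (key v h)
    set seq : ℕ → ZMod n := fun k => st^[k] v0 with hseq
    have hseqF : ∀ k, seq k ∉ F := by
      intro k
      induction k with
      | zero => exact hv0
      | succ k ih =>
        have : seq (k+1) = st (seq k) := by rw [hseq]; simp [Function.iterate_succ_apply']
        rw [this]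
        exact (hstp _ ih).1
    set R : ZMod n → ZMod n → Prop := fun a b =>
      a ∈ (↑F : Set (ZMod n))ᶜ ∧ b ∈ (↑F : Set (ZMod n))ᶜ ∧ A a b with hR
    have hstep : ∀ k, R (seq k) (seq (k+1)) := by
      intro k
      have hsucc : seq (k+1) = st (seq k) := by rw [hseq]; simp [Function.iterate_succ_apply']
      refine ⟨by simp [hseqF k], by simp [hseqF (k+1)], ?_⟩
      rw [hsucc]
      exact (hstp _ (hseqF k)).2
    have hchain : ∀ i j, i < j → Relation.TransGen R (seq i) (seq j) := by
      intro i j hij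
      induction j with
      | zero => omega
      | succ j ih =>
        rcases Nat.lt_succ_iff_lt_or_eq.mp hij with h | h
        · exact (ih h).tail (hstep j)
        · rw [h]; exact Relation.TransGen.single (hstep j)
    obtain ⟨i, j, hne, heq⟩ := Finite.exists_ne_map_eq_of_infinite seq
    rcases Nat.lt_or_ge i j with h | h
    · exact hFvs (seq i) (heq ▸ hchain i j h)
    · have h' : j < i := by omega
      exact hFvs (seq j) (heq ▸ hchain j i h')
end

section
/- For all integers g ≥ 3 and f ≥ 1, there exists a loopless digraph D on exactly f(g−1)+1 vertices with digirth g whose minimum feedback vertex set has size exactly f, together with two distinct vertices x and y of D such that no feedback vertex set of size f contains both x and y. -/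
lemma acyclic_of_measure' {V : Type*} (r : V → V → Prop) (μ : V → ℕ)
    (h : ∀ a b, r a b → μ a < μ b) (v : V) : ¬ Relation.TransGen r v v := by
  intro hv
  have h2 : Relation.TransGen (fun a b => μ a < μ b) v v := Relation.TransGen.mono h v v hv
  have key : ∀ a b : V, Relation.TransGen (fun a b => μ a < μ b) a b → μ a < μ b := by
    intro a b hab
    induction hab with
    | single h' => exact h'
    | tail _ h' ih => exact lt_trans ih h'
  exact lt_irrefl _ (key v v h2)

lemma cycle_of_step' {V : Type*} [Finite V] (r : V → V → Prop) (S : Set V)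
    (hne : S.Nonempty) (h : ∀ v ∈ S, ∃ w ∈ S, r v w) :
    ∃ v, Relation.TransGen (fun a b => a ∈ S ∧ b ∈ S ∧ r a b) v v := by
  classical
  obtain ⟨v₀, hv₀⟩ := hne
  have hnext : ∀ v : V, ∃ w : V, v ∈ S → w ∈ S ∧ (v ∈ S → r v w) := by
    intro v
    by_cases hv : v ∈ S
    · obtain ⟨w, hw, hrw⟩ := h v hv
      exact ⟨w, fun _ => ⟨hw, fun _ => hrw⟩⟩
    · exact ⟨v, fun hv' => absurd hv' hv⟩
  choose next hnext using hnext
  set u : ℕ → V := fun k => next^[k] v₀ with hu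
  have husucc : ∀ k, u (k+1) = next (u k) := by
    intro k; simp [hu, Function.iterate_succ_apply']
  have hmem : ∀ k, u k ∈ S := by
    intro k
    induction k with
    | zero => exact hv₀
    | succ k ih => rw [husucc]; exact (hnext (u k) ih).1
  have hstep : ∀ k, Relation.TransGen (fun a b => a ∈ S ∧ b ∈ S ∧ r a b) (u k) (u (k+1)) := by
    intro k
    apply Relation.TransGen.single
    refine ⟨hmem k, hmem (k+1), ?_⟩
    rw [husucc]
    exact (hnext (u k) (hmem k)).2 (hmem k)
  have hchain : ∀ i k, i < k → Relation.TransGen (fun a b => a ∈ S ∧ b ∈ S ∧ r a b) (u i) (u k) := by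
    intro i k hik
    induction k with
    | zero => omega
    | succ k ih =>
      rcases Nat.lt_or_ge i k with h' | h'
      · exact (ih h').trans (hstep k)
      · have : i = k := by omega
        subst this; exact hstep i
  obtain ⟨i, j, hij, heq⟩ := Finite.exists_ne_map_eq_of_infinite u
  rcases Nat.lt_or_ge i j with h' | h'
  · exact ⟨u i, heq ▸ hchain i j h'⟩
  · have : j < i := by omega
    exact ⟨u j, heq ▸ hchain j i this⟩

/-- For all `g ≥ 3` and `f ≥ 1` there is a loopless digraph on `f(g-1)+1`
vertices with digirth `g` whose minimum feedback vertex set has size exactly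
`f`, together with two distinct vertices `x`, `y` such that no feedback vertex
set of size `f` contains both. -/
theorem exists_digraph_min_feedback_two_vertices (g f : ℕ) (hg : 3 ≤ g) (hf : 1 ≤ f) :
    ∃ (V : Type) (instV : Fintype V) (A : V → V → Prop) (x y : V),
      @Fintype.card V instV = f * (g - 1) + 1 ∧
      Irreflexive A ∧
      (∀ (m : ℕ) (c : Fin m → V), IsDicycle A c → g ≤ m) ∧
      (∃ c : Fin g → V, IsDicycle A c) ∧
      (∃ F : Finset V, FeedbackVertexSet A (↑F : Set V) ∧ F.card = f) ∧
      (∀ F : Finset V, FeedbackVertexSet A (↑F : Set V) → f ≤ F.card) ∧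
      x ≠ y ∧
      (∀ F : Finset V, FeedbackVertexSet A (↑F : Set V) → F.card = f →
        ¬ (x ∈ F ∧ y ∈ F)) := by
  classical
  set n := f * (g - 1) + 1 with hn
  haveI : NeZero n := ⟨Nat.succ_ne_zero _⟩
  have hmul2 : f * 2 ≤ f * (g - 1) := Nat.mul_le_mul_left f (by omega)
  have h2fn : 2 * f < n := by omega
  have hfn : f < n := by omega
  have h1n : 1 < n := by omega
  haveI : Fact (1 < n) := ⟨h1n⟩
  set A : ZMod n → ZMod n → Prop := fun a b => 1 ≤ (b - a).val ∧ (b - a).val ≤ f with hA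
  have harc_add : ∀ (v : ZMod n) (d : ℕ), 1 ≤ d → d ≤ f → A v (v + (d : ZMod n)) := by
    intro v d h1 h2
    have hd : (v + (d : ZMod n) - v) = (d : ZMod n) := by ring
    rw [hA]
    simp only [hd]
    rw [ZMod.val_cast_of_lt (by omega)]
    exact ⟨h1, h2⟩
  -- the candidate-image lemma
  have himg : ∀ v : ZMod n,
      ((Finset.Icc 1 f).image (fun d : ℕ => v + (d : ZMod n))).card = f := by
    intro v
    rw [Finset.card_image_of_injOn, Nat.card_Icc]
    · omega
    · intro d₁ h₁ d₂ h₂ hEq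
      simp only [Finset.coe_Icc, Set.mem_Icc] at h₁ h₂
      have : (d₁ : ZMod n) = (d₂ : ZMod n) := by
        have := add_left_cancel hEq
        exact this
      have := congrArg ZMod.val this
      rwa [ZMod.val_cast_of_lt (by omega), ZMod.val_cast_of_lt (by omega)] at this
  -- escape: if some vertex outside F has all out-neighbours in F,
  -- then F contains the whole candidate image
  have hescape : ∀ (F : Finset (ZMod n)) (v : ZMod n),
      (¬ ∃ w ∈ (↑F : Set (ZMod n))ᶜ, A v w) →
      ((Finset.Icc 1 f).image (fun d : ℕ => v + (d : ZMod n))) ⊆ F := by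
    intro F v hno
    push_neg at hno
    intro w hw
    simp only [Finset.mem_image, Finset.mem_Icc] at hw
    obtain ⟨d, ⟨hd1, hd2⟩, rfl⟩ := hw
    by_contra hwF
    exact hno _ (by simpa using hwF) (harc_add v d hd1 hd2)
  refine ⟨ZMod n, inferInstance, A, 0, ((f : ℕ) : ZMod n), ?_, ?_, ?_, ?_, ?_, ?_, ?_, ?_⟩
  · -- card
    exact ZMod.card n
  · -- irreflexive
    intro a
    rw [hA]
    simp
  · -- digirth lower bound
    intro m c hc
    obtain _ | m := m
    · exact absurd hc.1 (by omega)
    obtain ⟨-, hinj, harc⟩ := hc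
    set D : Fin (m+1) → ℕ := fun i => (c (finRotate (m+1) i) - c i).val with hD
    have hrot : ∀ i : Fin (m+1), (finRotate (m+1) i : ℕ) = ((i : ℕ) + 1) % (m+1) := by
      intro i
      rw [finRotate_succ_apply, Fin.add_def]
      simp [Nat.add_mod, Nat.mod_mod_of_dvd]
    have hstep : ∀ i : Fin (m+1), A (c i) (c (finRotate (m+1) i)) := by
      intro i
      apply harc
      rcases Nat.lt_or_ge ((i : ℕ) + 1) (m+1) with h' | h'
      · left; rw [hrot i, Nat.mod_eq_of_lt h']
      · right
        have hi : (i : ℕ) = m := by have := i.isLt; omega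
        constructor
        · simpa using hi
        · rw [hrot i, hi]
          simp
    have hDbound : ∀ i, 1 ≤ D i ∧ D i ≤ f := fun i => hstep i
    have hkey : ((∑ i, D i : ℕ) : ZMod n) = 0 := by
      push_cast
      have hterm : ∀ i : Fin (m+1), ((D i : ℕ) : ZMod n) = c (finRotate (m+1) i) - c i := by
        intro i
        rw [hD]
        simp [ZMod.natCast_val, ZMod.cast_id]
      rw [Finset.sum_congr rfl (fun i _ => hterm i), Finset.sum_sub_distrib,
        Equiv.sum_comp (finRotate (m+1)) c, sub_self]
    have hdvd : n ∣ ∑ i, D i := (ZMod.natCast_eq_zero_iff _ n).mp hkey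
    have hlow : m + 1 ≤ ∑ i, D i := by
      calc m + 1 = ∑ _i : Fin (m+1), 1 := by simp
        _ ≤ ∑ i, D i := Finset.sum_le_sum (fun i _ => (hDbound i).1)
    have hpos : 0 < ∑ i, D i := by omega
    have hnle : n ≤ ∑ i, D i := Nat.le_of_dvd hpos hdvd
    have hup : ∑ i, D i ≤ (m + 1) * f := by
      calc ∑ i, D i ≤ ∑ _i : Fin (m+1), f := Finset.sum_le_sum (fun i _ => (hDbound i).2)
        _ = (m + 1) * f := by simp [Finset.sum_const, Finset.card_univ, mul_comm]
    -- n ≤ (m+1) * f, n = f*(g-1)+1 > f*(g-1), so g-1 < m+1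
    by_contra hgm
    push_neg at hgm
    have : (m + 1) * f ≤ (g - 1) * f := Nat.mul_le_mul_right f (by omega)
    have : (g - 1) * f = f * (g - 1) := Nat.mul_comm _ _
    omega
  · -- existence of a g-cycle
    refine ⟨fun i => ((f * (i : ℕ) : ℕ) : ZMod n), by omega, ?_, ?_⟩
    · intro i j hEq
      have hvals := congrArg ZMod.val hEq
      have hib : f * (i : ℕ) < n := by
        have : f * (i : ℕ) ≤ f * (g - 1) := Nat.mul_le_mul_left f (by have := i.isLt; omega)
        omega
      have hjb : f * (j : ℕ) < n := by
        have : f * (j : ℕ) ≤ f * (g - 1) := Nat.mul_le_mul_left f (by have := j.isLt; omega)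
        omega
      rw [ZMod.val_cast_of_lt hib, ZMod.val_cast_of_lt hjb] at hvals
      have : (i : ℕ) = (j : ℕ) := by
        have := Nat.eq_of_mul_eq_mul_left (show 0 < f by omega) hvals
        exact this
      exact Fin.ext this
    · intro i j hij
      rcases hij with h' | ⟨hi, hj⟩
      · have : ((f * (j : ℕ) : ℕ) : ZMod n) = ((f * (i : ℕ) : ℕ) : ZMod n) + ((f : ℕ) : ZMod n) := by
          rw [h']
          push_cast
          ring
        have hdiff : ((f * (j : ℕ) : ℕ) : ZMod n) - ((f * (i : ℕ) : ℕ) : ZMod n) = ((f : ℕ) : ZMod n) := by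
          rw [this]; ring
        rw [hA]
        simp only [hdiff]
        rw [ZMod.val_cast_of_lt (by omega)]
        exact ⟨hf, le_refl f⟩
      · have hcast : ((f * (g - 1) : ℕ) : ZMod n) = -1 := by
          have h0 : ((f * (g - 1) + 1 : ℕ) : ZMod n) = 0 := by
            rw [← hn]; exact ZMod.natCast_self n
          rw [Nat.cast_add, Nat.cast_one] at h0
          exact eq_neg_of_add_eq_zero_left h0
        have hdiff : ((f * (j : ℕ) : ℕ) : ZMod n) - ((f * (i : ℕ) : ℕ) : ZMod n) = 1 := by
          rw [hi, hj]
          simp only [Nat.mul_zero, Nat.cast_zero]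
          rw [hcast]
          ring
        rw [hA]
        simp only [hdiff]
        rw [ZMod.val_one]
        exact ⟨le_refl 1, hf⟩
  · -- FVS of size f exists
    refine ⟨(Finset.Ico (n - f) n).image (fun a : ℕ => (a : ZMod n)), ?_, ?_⟩
    · -- feedback vertex set
      intro v
      apply acyclic_of_measure' _ ZMod.val
      rintro a b ⟨ha, hb, h1, h2⟩
      simp only [Set.mem_compl_iff, Finset.coe_image, Set.mem_image,
        Finset.mem_coe, Finset.mem_Ico] at ha hb
      have ha' : a.val < n - f := by
        by_contra h'
        push_neg at h'
        exact ha ⟨a.val, ⟨h', a.val_lt⟩, by simp [ZMod.natCast_val, ZMod.cast_id]⟩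
      have hb' : b.val < n - f := by
        by_contra h'
        push_neg at h'
        exact hb ⟨b.val, ⟨h', b.val_lt⟩, by simp [ZMod.natCast_val, ZMod.cast_id]⟩
      have hbval : b = a + (b - a) := by ring
      have : b.val = (a.val + (b - a).val) % n := by
        conv_lhs => rw [hbval]
        exact ZMod.val_add a (b - a)
      rw [Nat.mod_eq_of_lt (by omega)] at this
      omega
    · -- cardinality
      rw [Finset.card_image_of_injOn, Nat.card_Ico]
      · omega
      · intro a ha b hb hEq
        simp only [Finset.coe_Ico, Set.mem_Ico] at ha hb
        have := congrArg ZMod.val hEq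
        rwa [ZMod.val_cast_of_lt ha.2, ZMod.val_cast_of_lt hb.2] at this
  · -- lower bound on FVS size
    intro F hF
    by_contra hlt
    push_neg at hlt
    -- complement is nonempty
    have hne : ((↑F : Set (ZMod n))ᶜ).Nonempty := by
      by_contra h'
      rw [Set.not_nonempty_iff_eq_empty, ← Set.compl_univ, compl_inj_iff] at h'
      have : F = Finset.univ := by
        apply Finset.coe_injective
        simpa using h'
      rw [this, Finset.card_univ, ZMod.card n] at hlt
      omega
    have hesc : ∀ v ∈ (↑F : Set (ZMod n))ᶜ, ∃ w ∈ (↑F : Set (ZMod n))ᶜ, A v w := by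
      intro v hv
      by_contra h'
      have hsub := hescape F v h'
      have := Finset.card_le_card hsub
      rw [himg v] at this
      omega
    obtain ⟨v, hv⟩ := cycle_of_step' A _ hne hesc
    exact hF v hv
  · -- x ≠ y
    intro hEq
    have := congrArg ZMod.val hEq
    rw [ZMod.val_zero, ZMod.val_cast_of_lt hfn] at this
    omega
  · -- no minimum FVS contains both x and y
    rintro F hF hcard ⟨hx, hy⟩
    have hne : ((↑F : Set (ZMod n))ᶜ).Nonempty := by
      by_contra h'
      rw [Set.not_nonempty_iff_eq_empty, ← Set.compl_univ, compl_inj_iff] at h'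
      have : F = Finset.univ := by
        apply Finset.coe_injective
        simpa using h'
      rw [this, Finset.card_univ, ZMod.card n] at hcard
      omega
    have hesc : ∀ v ∈ (↑F : Set (ZMod n))ᶜ, ∃ w ∈ (↑F : Set (ZMod n))ᶜ, A v w := by
      intro v hv
      by_contra h'
      have hsub := hescape F v h'
      have hFeq : (Finset.Icc 1 f).image (fun d : ℕ => v + (d : ZMod n)) = F :=
        Finset.eq_of_subset_of_card_le hsub (by rw [himg v, hcard])
      -- both 0 and f are in the image
      have h0 : (0 : ZMod n) ∈ (Finset.Icc 1 f).image (fun d : ℕ => v + (d : ZMod n)) := by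
        rw [hFeq]; exact hx
      have hfm : ((f : ℕ) : ZMod n) ∈ (Finset.Icc 1 f).image (fun d : ℕ => v + (d : ZMod n)) := by
        rw [hFeq]; exact hy
      simp only [Finset.mem_image, Finset.mem_Icc] at h0 hfm
      obtain ⟨d₁, ⟨hd₁1, hd₁2⟩, he₁⟩ := h0
      obtain ⟨d₂, ⟨hd₂1, hd₂2⟩, he₂⟩ := hfm
      -- v + d₁ = 0 and v + d₂ = f, so d₂ = f + d₁ in ZMod n
      have : ((d₂ : ℕ) : ZMod n) = ((f + d₁ : ℕ) : ZMod n) := by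
        push_cast
        linear_combination he₂ - he₁
      have := congrArg ZMod.val this
      rw [ZMod.val_cast_of_lt (by omega), ZMod.val_cast_of_lt (by omega)] at this
      omega
    obtain ⟨v, hv⟩ := cycle_of_step' A _ hne hesc
    exact hF v hv
end

section
/- For all integers g ≥ 3 and f ≥ 1, there exists a loopless digraph on exactly f(g−1)+1 vertices which has digirth g and whose largest acyclic set has size exactly f(g−2)+1: there is an acyclic set of size f(g−2)+1, and every acyclic set has size at most f(g−2)+1. -/
lemma acyclicSet_of_rank {V : Type*} (A : V → V → Prop) (S : Set V) (r : V → ℕ)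
    (h : ∀ a b, a ∈ S → b ∈ S → A a b → r a < r b) : AcyclicSet A S := by
  intro v hv
  have key : ∀ x y, Relation.TransGen (fun a b => a ∈ S ∧ b ∈ S ∧ A a b) x y → r x < r y := by
    intro x y hxy
    induction hxy with
    | single h1 => exact h _ _ h1.1 h1.2.1 h1.2.2
    | tail _ h2 ih => exact lt_trans ih (h _ _ h2.1 h2.2.1 h2.2.2)
  exact lt_irrefl _ (key v v hv)

lemma not_acyclicSet_of_serial {V : Type*} [Fintype V] (A : V → V → Prop) (S : Set V)
    (v0 : V) (hv0 : v0 ∈ S) (h : ∀ a ∈ S, ∃ b ∈ S, A a b) : ¬ AcyclicSet A S := by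
  classical
  choose! nxt hmem harc using h
  set rel : V → V → Prop := fun a b => a ∈ S ∧ b ∈ S ∧ A a b with hrel
  let u : ℕ → V := fun i => nxt^[i] v0
  have hu : ∀ i, u i ∈ S := by
    intro i
    induction i with
    | zero => exact hv0
    | succ k ih =>
      show nxt^[k+1] v0 ∈ S
      rw [Function.iterate_succ_apply']
      exact hmem _ ih
  have hstep : ∀ i, rel (u i) (u (i + 1)) := by
    intro i
    have : u (i + 1) = nxt (u i) := Function.iterate_succ_apply' nxt i v0
    rw [this]
    exact ⟨hu i, hmem _ (hu i), harc _ (hu i)⟩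
  have htg : ∀ i j, i < j → Relation.TransGen rel (u i) (u j) := by
    intro i j hij
    induction j with
    | zero => omega
    | succ k ih =>
      rcases Nat.lt_succ_iff_lt_or_eq.mp hij with h1 | h1
      · exact (ih h1).tail (hstep k)
      · subst h1; exact Relation.TransGen.single (hstep i)
  obtain ⟨i, j, hne, heq⟩ :=
    Fintype.exists_ne_map_eq_of_card_lt (fun k : Fin (Fintype.card V + 1) => u k)
      (by simp)
  rcases hne.lt_or_gt with hlt | hlt
  · intro hac
    exact hac (u i) (heq ▸ htg i j hlt)
  · intro hac
    exact hac (u j) (heq ▸ htg j i hlt)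

/-- For all `g ≥ 3` and `f ≥ 1` there is a loopless digraph on `f(g-1)+1`
vertices with digirth `g` whose largest acyclic set has size exactly
`f(g-2)+1`. -/
theorem exists_digraph_max_acyclic (g f : ℕ) (hg : 3 ≤ g) (hf : 1 ≤ f) :
    ∃ (V : Type) (instV : Fintype V) (A : V → V → Prop),
      @Fintype.card V instV = f * (g - 1) + 1 ∧
      Irreflexive A ∧
      (∀ (m : ℕ) (c : Fin m → V), IsDicycle A c → g ≤ m) ∧
      (∃ c : Fin g → V, IsDicycle A c) ∧
      (∃ S : Finset V, AcyclicSet A (↑S : Set V) ∧ S.card = f * (g - 2) + 1) ∧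
      (∀ S : Finset V, AcyclicSet A (↑S : Set V) → S.card ≤ f * (g - 2) + 1) := by
  classical
  obtain ⟨n, hn⟩ : ∃ n, n = f * (g - 1) + 1 := ⟨_, rfl⟩
  haveI : NeZero n := ⟨by omega⟩
  have hkey : f * (g - 2) + f = f * (g - 1) := by
    have h1 : g - 1 = (g - 2) + 1 := by omega
    rw [h1, Nat.mul_add, Nat.mul_one]
  have hfn : f < n := by omega
  have hcard : Fintype.card (ZMod n) = n := ZMod.card n
  refine ⟨ZMod n, inferInstance,
    fun a b => 1 ≤ (b - a).val ∧ (b - a).val ≤ f, by rw [hcard, hn], ?_, ?_, ?_, ?_, ?_⟩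
  · -- irreflexive
    intro a ha
    rw [sub_self, ZMod.val_zero] at ha
    omega
  · -- digirth lower bound
    intro m c hc
    obtain ⟨hm, hinj, harc⟩ := hc
    haveI : NeZero m := ⟨by omega⟩
    have harc' : ∀ i : Fin m, 1 ≤ (c (i + 1) - c i).val ∧ (c (i + 1) - c i).val ≤ f := by
      intro i
      apply harc
      have hval : ((i + 1 : Fin m) : ℕ) = (i.val + 1) % m := by
        rw [Fin.val_add, Fin.val_one']
        conv_rhs => rw [Nat.add_mod, Nat.mod_eq_of_lt i.isLt]
      rcases Nat.lt_or_ge (i.val + 1) m with hlt | hge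
      · left; rw [hval, Nat.mod_eq_of_lt hlt]
      · right
        refine ⟨by omega, ?_⟩
        rw [hval]
        have h2 : i.val + 1 = m := by omega
        rw [h2, Nat.mod_self]
    set d : Fin m → ℕ := fun i => (c (i + 1) - c i).val with hd
    have hsum0 : ((∑ i, d i : ℕ) : ZMod n) = 0 := by
      push_cast
      have hterm : ∀ i : Fin m, ((d i : ZMod n)) = c (i + 1) - c i := by
        intro i
        rw [hd]
        simp [ZMod.natCast_val, ZMod.cast_id]
      rw [Finset.sum_congr rfl (fun i _ => hterm i), Finset.sum_sub_distrib]
      have hre := Fintype.sum_equiv (Equiv.addRight (1 : Fin m))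
        (fun i => c (i + 1)) c (fun i => rfl)
      rw [hre, sub_self]
    have hdvd : n ∣ ∑ i, d i := (ZMod.natCast_eq_zero_iff _ n).mp hsum0
    have hlb : m * 1 ≤ ∑ i, d i := by
      have := Finset.card_nsmul_le_sum Finset.univ d 1 (fun i _ => (harc' i).1)
      simpa using this
    have hub : ∑ i, d i ≤ m * f := by
      have := Finset.sum_le_card_nsmul Finset.univ d f (fun i _ => (harc' i).2)
      simpa using this
    have hnle : n ≤ ∑ i, d i := Nat.le_of_dvd (by omega) hdvd
    by_contra hcon
    push_neg at hcon
    have h2 : m * f ≤ (g - 1) * f := Nat.mul_le_mul_right f (by omega)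
    have h2' : (g - 1) * f = f * (g - 1) := Nat.mul_comm _ _
    omega
  · -- a cycle of length exactly g
    refine ⟨fun i : Fin g => ((i.val * f : ℕ) : ZMod n), by omega, ?_, ?_⟩
    · have hvalc : ∀ i : Fin g, (((i.val * f : ℕ) : ZMod n)).val = i.val * f := by
        intro i
        apply ZMod.val_cast_of_lt
        have h1 : i.val * f ≤ (g - 1) * f := Nat.mul_le_mul_right f (by omega)
        have h1' : (g - 1) * f = f * (g - 1) := Nat.mul_comm _ _
        omega
      intro i j hij
      have h1 := congrArg ZMod.val hij
      rw [hvalc i, hvalc j] at h1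
      exact Fin.ext (Nat.eq_of_mul_eq_mul_right (by omega) h1)
    · intro i j hij
      show 1 ≤ (((j.val * f : ℕ) : ZMod n) - ((i.val * f : ℕ) : ZMod n)).val ∧
        (((j.val * f : ℕ) : ZMod n) - ((i.val * f : ℕ) : ZMod n)).val ≤ f
      rcases hij with h1 | ⟨h1, h2⟩
      · have heq : ((j.val * f : ℕ) : ZMod n) - ((i.val * f : ℕ) : ZMod n) = (f : ZMod n) := by
          rw [h1]; push_cast; ring
        rw [heq, ZMod.val_cast_of_lt hfn]
        exact ⟨hf, le_refl f⟩
      · haveI : Fact (1 < n) := ⟨by omega⟩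
        have hci : ((i.val * f : ℕ) : ZMod n) = -1 := by
          rw [h1]
          have h3 : (g - 1) * f = n - 1 := by rw [Nat.mul_comm]; omega
          rw [h3, Nat.cast_sub (by omega : 1 ≤ n), ZMod.natCast_self, Nat.cast_one, zero_sub]
        have hcj : ((j.val * f : ℕ) : ZMod n) = 0 := by rw [h2]; simp
        rw [hci, hcj, sub_neg_eq_add, zero_add, ZMod.val_one]
        exact ⟨le_refl 1, hf⟩
  · -- a large acyclic set
    refine ⟨(Finset.range (f * (g - 2) + 1)).image (fun i : ℕ => (i : ZMod n)), ?_, ?_⟩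
    · apply acyclicSet_of_rank _ _ ZMod.val
      intro a b ha hb hab
      have hmemS : ∀ v : ZMod n,
          v ∈ ((Finset.range (f * (g - 2) + 1)).image (fun i : ℕ => (i : ZMod n)) :
            Set (ZMod n)) → v.val ≤ f * (g - 2) := by
        intro v hv
        rw [Finset.coe_image, Set.mem_image] at hv
        obtain ⟨i, hi, rfl⟩ := hv
        rw [Finset.mem_coe, Finset.mem_range] at hi
        rw [ZMod.val_cast_of_lt (by omega : i < n)]
        omega
      have hav := hmemS a ha
      have hval : b.val = (a.val + (b - a).val) % n := by
        conv_lhs => rw [show b = a + (b - a) by ring]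
        exact ZMod.val_add a (b - a)
      have hlt : a.val + (b - a).val < n := by
        have := hab.2
        omega
      rw [hval, Nat.mod_eq_of_lt hlt]
      have := hab.1
      omega
    · rw [Finset.card_image_of_injOn, Finset.card_range]
      intro i hi j hj hij
      rw [Finset.mem_coe, Finset.mem_range] at hi hj
      have h1 := congrArg ZMod.val hij
      rw [ZMod.val_cast_of_lt (by omega : i < n),
        ZMod.val_cast_of_lt (by omega : j < n)] at h1
      exact h1
  · -- upper bound on acyclic sets
    intro S hS
    by_contra hcon
    push_neg at hcon
    obtain ⟨v0, hv0⟩ := Finset.card_pos.mp (by omega : 0 < S.card)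
    refine not_acyclicSet_of_serial _ (↑S : Set (ZMod n)) v0 hv0 ?_ hS
    intro a ha
    set T : Finset (ZMod n) := (Finset.Icc 1 f).image (fun k : ℕ => a + (k : ZMod n)) with hT
    have hTcard : T.card = f := by
      rw [hT, Finset.card_image_of_injOn, Nat.card_Icc]
      · omega
      · intro k1 hk1 k2 hk2 heq
        rw [Finset.coe_Icc, Set.mem_Icc] at hk1 hk2
        have h1 : ((k1 : ℕ) : ZMod n) = ((k2 : ℕ) : ZMod n) := add_left_cancel heq
        have h2 := congrArg ZMod.val h1
        rw [ZMod.val_cast_of_lt (by omega : k1 < n),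
          ZMod.val_cast_of_lt (by omega : k2 < n)] at h2
        exact h2
    have hint : (T ∩ S).Nonempty := by
      rw [← Finset.card_pos]
      have h1 := Finset.card_union_add_card_inter T S
      have h2 : (T ∪ S).card ≤ n := by
        have h3 := Finset.card_le_univ (T ∪ S)
        rwa [hcard] at h3
      omega
    obtain ⟨b, hb⟩ := hint
    rw [Finset.mem_inter] at hb
    refine ⟨b, hb.2, ?_⟩
    have hbT : b ∈ T := hb.1
    rw [hT, Finset.mem_image] at hbT
    obtain ⟨k, hk, rfl⟩ := hbT
    rw [Finset.mem_Icc] at hk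
    have heq : (a + (k : ZMod n)) - a = ((k : ℕ) : ZMod n) := by ring
    rw [heq, ZMod.val_cast_of_lt (by omega : k < n)]
    exact hk
end

section
/- For every integer n ≥ 3 there exists an oriented graph on n vertices (a loopless digraph with no directed cycle of length 2) containing a directed cycle of length 3, in which every acyclic set of vertices has size at most ⌈(n+1)/2⌉. -/
private theorem four_case :
    ∃ (V : Type) (instV : Fintype V) (A : V → V → Prop),
      @Fintype.card V instV = 4 ∧
      Irreflexive A ∧
      (∀ x y : V, A x y → ¬ A y x) ∧
      (∃ c : Fin 3 → V, IsDicycle A c) ∧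
      (∀ S : Finset V, AcyclicSet A (↑S : Set V) →
        (S.card : ℤ) ≤ ⌈(((4:ℕ) : ℚ) + 1) / 2⌉) := by
  set A : ZMod 4 → ZMod 4 → Prop :=
    fun a b => (a = 0 ∧ b = 1) ∨ (a = 1 ∧ b = 2) ∨ (a = 2 ∧ b = 0) with hA
  refine ⟨ZMod 4, inferInstance, A, rfl, fun a => by revert a; decide, fun x y => by revert x y; decide, ?_, ?_⟩
  · refine ⟨![0, 1, 2], Nat.zero_lt_succ 2, by decide, by decide⟩
  · intro S hS
    classical
    have hc4 : S.card ≤ 4 := by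
      have := S.card_le_univ
      simpa using this
    have key : S.card ≤ 3 := by
      by_contra hgt
      have hcard : S.card = 4 := by omega
      have huniv : S = Finset.univ := Finset.eq_univ_of_card S (by simpa using hcard)
      have hmem : ∀ v : ZMod 4, v ∈ (S : Set (ZMod 4)) := by
        intro v; simp [huniv]
      have loop : Relation.TransGen
          (fun a b => a ∈ (S : Set (ZMod 4)) ∧ b ∈ (S : Set (ZMod 4)) ∧ A a b) 0 0 := by
        refine Relation.TransGen.head ⟨hmem 0, hmem 1, Or.inl ⟨rfl, rfl⟩⟩ ?_
        refine Relation.TransGen.head ⟨hmem 1, hmem 2, Or.inr (Or.inl ⟨rfl, rfl⟩)⟩ ?_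
        exact Relation.TransGen.single ⟨hmem 2, hmem 0, Or.inr (Or.inr ⟨rfl, rfl⟩)⟩
      exact hS 0 loop
    have hceil : (3 : ℤ) ≤ ⌈(((4:ℕ) : ℚ) + 1) / 2⌉ := by
      have : (2 : ℤ) < ⌈(((4:ℕ) : ℚ) + 1) / 2⌉ := by
        rw [Int.lt_ceil]
        norm_num
      omega
    omega

private theorem general_case (n : ℕ) (hn : 3 ≤ n) (hn4 : n ≠ 4) :
    ∃ (V : Type) (instV : Fintype V) (A : V → V → Prop),
      @Fintype.card V instV = n ∧
      Irreflexive A ∧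
      (∀ x y : V, A x y → ¬ A y x) ∧
      (∃ c : Fin 3 → V, IsDicycle A c) ∧
      (∀ S : Finset V, AcyclicSet A (↑S : Set V) →
        (S.card : ℤ) ≤ ⌈((n : ℚ) + 1) / 2⌉) := by
  haveI : NeZero n := ⟨by omega⟩
  set t : ℕ := (n - 1) / 2 with ht
  have ht1 : 1 ≤ t := by omega
  have h2t : 2 * t ≤ n - 1 := by omega
  have h3t : n ≤ 3 * t := by omega
  set A : ZMod n → ZMod n → Prop :=
    fun a b => ∃ k : ℕ, 1 ≤ k ∧ k ≤ t ∧ b = a + (k : ZMod n) with hA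
  refine ⟨ZMod n, inferInstance, A, ZMod.card n, ?_, ?_, ?_, ?_⟩
  · rintro a ⟨k, hk1, hk2, hk3⟩
    have h0 : (k : ZMod n) = 0 := left_eq_add.mp hk3
    rw [ZMod.natCast_eq_zero_iff] at h0
    have := Nat.le_of_dvd (by omega) h0
    omega
  · rintro x y ⟨k, hk1, hk2, hk3⟩ ⟨j, hj1, hj2, hj3⟩
    rw [hk3, add_assoc] at hj3
    have h0 : ((k + j : ℕ) : ZMod n) = 0 := by
      push_cast
      exact left_eq_add.mp hj3
    rw [ZMod.natCast_eq_zero_iff] at h0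
    have := Nat.le_of_dvd (by omega) h0
    omega
  · refine ⟨fun i => ((i : ℕ) * t : ℕ), Nat.zero_lt_succ 2, ?_, ?_⟩
    · intro i j h
      have hv : ∀ i : Fin 3, (((i : ℕ) * t : ℕ) : ZMod n).val = (i : ℕ) * t := by
        intro i
        have hi3 : (i : ℕ) ≤ 2 := Nat.lt_succ_iff.mp i.isLt
        have hmul : (i : ℕ) * t ≤ 2 * t := Nat.mul_le_mul_right t hi3
        exact ZMod.val_cast_of_lt (by omega)
      have h2 : (i : ℕ) * t = (j : ℕ) * t := by
        rw [← hv i, ← hv j]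
        exact congrArg ZMod.val h
      have : (i : ℕ) = (j : ℕ) := by
        have := i.isLt; have := j.isLt
        exact Nat.eq_of_mul_eq_mul_right (by omega) h2
      exact Fin.ext this
    · intro i j hij
      rcases hij with h | ⟨hi, hj⟩
      · refine ⟨t, ht1, le_refl t, ?_⟩
        show (((j : ℕ) * t : ℕ) : ZMod n) = (((i : ℕ) * t : ℕ) : ZMod n) + (t : ZMod n)
        rw [h]
        push_cast
        ring
      · refine ⟨n - 2 * t, by omega, by omega, ?_⟩
        have hi2 : (i : ℕ) = 2 := by omega
        have hzz : (((2 * t) : ℕ) : ZMod n) + ((n - 2*t : ℕ) : ZMod n) = ((n : ℕ) : ZMod n) := by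
          rw [← Nat.cast_add]
          congr 1
          omega
        rw [ZMod.natCast_self] at hzz
        show (((j : ℕ) * t : ℕ) : ZMod n) = (((i : ℕ) * t : ℕ) : ZMod n) + ((n - 2 * t : ℕ) : ZMod n)
        rw [hi2, hj]
        simp only [Nat.zero_mul, Nat.cast_zero]
        exact hzz.symm
  · intro S hS
    classical
    have key : S.card ≤ n - t := by
      by_contra hcard
      push_neg at hcard
      have hcompl : Sᶜ.card ≤ t - 1 := by
        have := Finset.card_compl S
        rw [ZMod.card n] at this
        have hle := S.card_le_univ
        simp only [Finset.card_univ, ZMod.card n] at hle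
        omega
      have step : ∀ a : ZMod n, a ∈ S → ∃ k : ℕ, 1 ≤ k ∧ k ≤ t ∧ a + (k : ZMod n) ∈ S := by
        intro a ha
        by_contra hstep
        push_neg at hstep
        have himg : (Finset.Icc 1 t).image (fun k : ℕ => a + (k : ZMod n)) ⊆ Sᶜ := by
          intro x hx
          simp only [Finset.mem_image, Finset.mem_Icc] at hx
          obtain ⟨k, ⟨hk1, hk2⟩, rfl⟩ := hx
          simp only [Finset.mem_compl]
          exact hstep k hk1 hk2
        have hinj : Set.InjOn (fun k : ℕ => a + (k : ZMod n)) (Finset.Icc 1 t) := by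
          intro k hk j hj h
          simp only [Finset.coe_Icc, Set.mem_Icc] at hk hj
          have h1 : (k : ZMod n) = (j : ZMod n) := by
            have := add_left_cancel h
            simpa using this
          have h2 : (k : ZMod n).val = (j : ZMod n).val := by rw [h1]
          rwa [ZMod.val_cast_of_lt (by omega), ZMod.val_cast_of_lt (by omega)] at h2
        have hcc := Finset.card_le_card himg
        rw [Finset.card_image_of_injOn hinj, Nat.card_Icc] at hcc
        omega
      have reach : ∀ d : ℕ, ∀ a b : ZMod n, a ∈ S → b ∈ S → (b - a).val = d → 1 ≤ d →
          Relation.TransGen (fun x y => x ∈ (S : Set (ZMod n)) ∧ y ∈ (S : Set (ZMod n)) ∧ A x y) a b := by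
        intro d
        induction d using Nat.strong_induction_on with
        | _ d ih =>
          intro a b ha hb hd hd1
          have hba : b = a + ((d : ℕ) : ZMod n) := by
            have := ZMod.natCast_zmod_val (b - a)
            rw [hd] at this
            linear_combination -this
          by_cases hdt : d ≤ t
          · exact Relation.TransGen.single ⟨ha, hb, d, hd1, hdt, hba⟩
          · push_neg at hdt
            obtain ⟨k, hk1, hk2, hkS⟩ := step a ha
            have hdlt : d < n := hd ▸ ZMod.val_lt (b - a)
            have hbc : (b - (a + (k : ZMod n))).val = d - k := by
              have h1 : b - (a + (k : ZMod n)) = ((d - k : ℕ) : ZMod n) := by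
                rw [Nat.cast_sub (by omega), hba]
                ring
              rw [h1, ZMod.val_cast_of_lt (by omega)]
            have htg := ih (d - k) (by omega) (a + (k : ZMod n)) b hkS hb hbc (by omega)
            exact Relation.TransGen.head ⟨ha, hkS, k, hk1, hk2, rfl⟩ htg
      have hS2 : 1 < S.card := by omega
      obtain ⟨v, hv⟩ := Finset.card_pos.mp (show 0 < S.card by omega)
      obtain ⟨w, hw, hwv⟩ := Finset.exists_mem_ne hS2 v
      have hd1 : 1 ≤ (w - v).val := by
        rcases Nat.eq_zero_or_pos (w - v).val with h | h
        · exact absurd (sub_eq_zero.mp ((ZMod.val_eq_zero _).mp h)) hwv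
        · exact h
      have hd2 : 1 ≤ (v - w).val := by
        rcases Nat.eq_zero_or_pos (v - w).val with h | h
        · exact absurd (sub_eq_zero.mp ((ZMod.val_eq_zero _).mp h)).symm hwv
        · exact h
      exact hS v ((reach _ v w hv hw rfl hd1).trans (reach _ w v hw hv rfl hd2))
    have hceil : ((n : ℤ) - t) ≤ ⌈((n : ℚ) + 1) / 2⌉ := by
      have hlt : ((n : ℤ) - t - 1) < ⌈((n : ℚ) + 1) / 2⌉ := by
        rw [Int.lt_ceil]
        push_cast
        rw [lt_div_iff₀ (by norm_num)]
        have h2 : n ≤ 2 * t + 2 := by omega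
        have h2' : (n : ℚ) ≤ 2 * (t : ℚ) + 2 := by exact_mod_cast h2
        linarith
      omega
    have hfin : (S.card : ℤ) ≤ (n : ℤ) - t := by
      have htn : t ≤ n := by omega
      omega
    omega

/-- For every `n ≥ 3` there is an oriented graph (loopless digraph with no
digon) on `n` vertices containing a directed triangle, every acyclic set of
which has size at most `⌈(n+1)/2⌉`. -/
theorem exists_oriented_graph_acyclic_le (n : ℕ) (hn : 3 ≤ n) :
    ∃ (V : Type) (instV : Fintype V) (A : V → V → Prop),
      @Fintype.card V instV = n ∧
      Irreflexive A ∧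
      (∀ x y : V, A x y → ¬ A y x) ∧
      (∃ c : Fin 3 → V, IsDicycle A c) ∧
      (∀ S : Finset V, AcyclicSet A (↑S : Set V) →
        (S.card : ℤ) ≤ ⌈((n : ℚ) + 1) / 2⌉) := by
  by_cases h4 : n = 4
  · subst h4
    exact four_case
  · exact general_case n hn h4
end

section
/- Let g ≥ 3 and let D be a loopless digraph on a finite vertex set V whose every directed cycle has length at least g, whose minimum feedback vertex set has size f ≥ 1, and which has two distinct vertices x, y such that no feedback vertex set of size f contains both x and y. Form the digraph D′ by adding g−1 new vertices s₁,…,s_{g−1}, the path arcs sᵢ → sᵢ₊₁ for 1 ≤ i ≤ g−2, and the arcs x → s₁, y → s₁, s_{g−1} → x, s_{g−1} → y. Then: every directed cycle of D′ has length at least g; the minimum feedback vertex set of D′ has size exactly f+1; and no feedback vertex set of D′ of size f+1 contains two distinct vertices among s₁,…,s_{g−1}. -/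
/-- The digraph `D'` obtained from `D = (V, A)` by adding `g - 1` new vertices
`s₀, …, s_{g-2}` (modelled by `Fin (g-1)`), path arcs `sᵢ → sᵢ₊₁`, and arcs
`x → s₀`, `y → s₀`, `s_{g-2} → x`, `s_{g-2} → y`. -/
def ExtendArcs {V : Type*} (A : V → V → Prop) (g : ℕ) (x y : V) :
    V ⊕ Fin (g - 1) → V ⊕ Fin (g - 1) → Prop
  | Sum.inl u, Sum.inl v => A u v
  | Sum.inl u, Sum.inr j => (u = x ∨ u = y) ∧ (j : ℕ) = 0
  | Sum.inr i, Sum.inl v => (i : ℕ) = g - 2 ∧ (v = x ∨ v = y)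
  | Sum.inr i, Sum.inr j => (j : ℕ) = (i : ℕ) + 1

lemma fvs_restrict {V : Type*} (A : V → V → Prop) (g : ℕ) (x y : V)
    (F' : Set (V ⊕ Fin (g - 1)))
    (h : FeedbackVertexSet (ExtendArcs A g x y) F') :
    FeedbackVertexSet A {v | Sum.inl v ∈ F'} := by
  intro v hv
  apply h (Sum.inl v)
  refine Relation.TransGen.lift Sum.inl ?_ v v hv
  rintro a b ⟨ha, hb, hab⟩
  exact ⟨ha, hb, hab⟩

lemma hit_gadget {V : Type*} (A : V → V → Prop) (g : ℕ) (x y : V)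
    (hg : 3 ≤ g) (z : V) (hz : z = x ∨ z = y)
    (F' : Finset (V ⊕ Fin (g - 1)))
    (hF' : FeedbackVertexSet (ExtendArcs A g x y) (↑F' : Set (V ⊕ Fin (g - 1))))
    (hzF : Sum.inl z ∉ F') (hinr : ∀ t : Fin (g - 1), Sum.inr t ∉ F') : False := by
  set R : (V ⊕ Fin (g - 1)) → (V ⊕ Fin (g - 1)) → Prop := fun a b =>
    a ∈ (↑F' : Set (V ⊕ Fin (g - 1)))ᶜ ∧ b ∈ (↑F' : Set (V ⊕ Fin (g - 1)))ᶜ ∧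
      ExtendArcs A g x y a b with hRdef
  have hchain : ∀ n, ∀ hn : n < g - 1,
      Relation.TransGen R (Sum.inl z) (Sum.inr (⟨n, hn⟩ : Fin (g - 1))) := by
    intro n
    induction n with
    | zero =>
      intro hn
      exact Relation.TransGen.single ⟨hzF, hinr _, ⟨hz, rfl⟩⟩
    | succ n ih =>
      intro hn
      exact (ih (by omega)).tail ⟨hinr _, hinr _, rfl⟩
  apply hF' (Sum.inl z)
  refine (hchain (g - 2) (by omega)).tail ⟨hinr _, hzF, ?_, hz⟩
  rfl

lemma girth_extend {V : Type*} (A : V → V → Prop) (g : ℕ) (x y : V)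
    (hg : 3 ≤ g)
    (hgirth : ∀ (m : ℕ) (c : Fin m → V), IsDicycle A c → g ≤ m)
    (m : ℕ) (c : Fin m → V ⊕ Fin (g - 1))
    (hc : IsDicycle (ExtendArcs A g x y) c) : g ≤ m := by
  classical
  obtain ⟨hm, hinj, harc⟩ := hc
  have hin : ∀ j : Fin m, ∃ i : Fin m, ExtendArcs A g x y (c i) (c j) := by
    intro j
    by_cases hj : (j : ℕ) = 0
    · exact ⟨⟨m - 1, by omega⟩, harc _ j (Or.inr ⟨rfl, hj⟩)⟩
    · refine ⟨⟨(j : ℕ) - 1, by omega⟩, harc _ j (Or.inl ?_)⟩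
      show (j : ℕ) = (j : ℕ) - 1 + 1
      omega
  have hout : ∀ i : Fin m, ∃ j : Fin m, ExtendArcs A g x y (c i) (c j) := by
    intro i
    by_cases hi : (i : ℕ) = m - 1
    · exact ⟨⟨0, hm⟩, harc i _ (Or.inr ⟨hi, rfl⟩)⟩
    · exact ⟨⟨(i : ℕ) + 1, by omega⟩, harc i _ (Or.inl rfl)⟩
  by_cases hall : ∀ i, ∃ v, c i = Sum.inl v
  · choose c' hc' using hall
    apply hgirth m c'
    refine ⟨hm, ?_, ?_⟩
    · intro a b hab
      apply hinj
      rw [hc' a, hc' b, hab]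
    · intro i j hij
      have h := harc i j hij
      rw [hc' i, hc' j] at h
      exact h
  · push_neg at hall
    obtain ⟨i₀, hi₀⟩ := hall
    obtain ⟨k, hk⟩ : ∃ k, c i₀ = Sum.inr k := by
      cases h : c i₀ with
      | inl v => exact absurd h (hi₀ v)
      | inr k => exact ⟨k, rfl⟩
    have hpred : ∀ t : Fin (g - 1), Sum.inr t ∈ Set.range c → (t : ℕ) ≠ 0 →
        ∃ s : Fin (g - 1), (s : ℕ) + 1 = (t : ℕ) ∧ Sum.inr s ∈ Set.range c := by
      rintro t ⟨j, hj⟩ ht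
      obtain ⟨i, hi⟩ := hin j
      rw [hj] at hi
      cases h : c i with
      | inl u => rw [h] at hi; exact absurd hi.2 ht
      | inr s => rw [h] at hi; exact ⟨s, hi.symm, ⟨i, h⟩⟩
    have hsucc : ∀ t : Fin (g - 1), Sum.inr t ∈ Set.range c → (t : ℕ) + 1 < g - 1 →
        ∃ s : Fin (g - 1), (s : ℕ) = (t : ℕ) + 1 ∧ Sum.inr s ∈ Set.range c := by
      rintro t ⟨i, hi⟩ ht
      obtain ⟨j, hj⟩ := hout i
      rw [hi] at hj
      cases h : c j with
      | inl v => rw [h] at hj; exact absurd hj.1 (by omega)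
      | inr s => rw [h] at hj; exact ⟨s, hj, ⟨j, h⟩⟩
    have h0 : Sum.inr (⟨0, by omega⟩ : Fin (g - 1)) ∈ Set.range c := by
      have key : ∀ n, ∀ t : Fin (g - 1), (t : ℕ) = n → Sum.inr t ∈ Set.range c →
          Sum.inr (⟨0, by omega⟩ : Fin (g - 1)) ∈ Set.range c := by
        intro n
        induction n with
        | zero =>
          intro t ht hmem
          have : t = ⟨0, by omega⟩ := Fin.ext ht
          rwa [this] at hmem
        | succ n ih =>
          intro t ht hmem
          obtain ⟨s, hs, hmem'⟩ := hpred t hmem (by omega)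
          exact ih s (by omega) hmem'
      exact key (k : ℕ) k rfl ⟨i₀, hk⟩
    have hall_inr : ∀ n, ∀ hn : n < g - 1, Sum.inr (⟨n, hn⟩ : Fin (g - 1)) ∈ Set.range c := by
      intro n
      induction n with
      | zero => intro hn; exact h0
      | succ n ih =>
        intro hn
        obtain ⟨s, hs, hmem⟩ := hsucc ⟨n, by omega⟩ (ih (by omega)) (by simpa using hn)
        have : s = ⟨n + 1, hn⟩ := Fin.ext hs
        rwa [this] at hmem
    obtain ⟨i', hi'⟩ := hall_inr (g - 2) (by omega)
    obtain ⟨j, hj⟩ := hout i'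
    rw [hi'] at hj
    obtain ⟨v, hv⟩ : ∃ v, c j = Sum.inl v := by
      cases h : c j with
      | inl v => exact ⟨v, rfl⟩
      | inr s =>
        rw [h] at hj
        have := s.isLt
        simp only [ExtendArcs] at hj
        omega
    set T : Finset (V ⊕ Fin (g - 1)) :=
      (Finset.univ.image (fun t : Fin (g - 1) => (Sum.inr t : V ⊕ Fin (g - 1)))) ∪ {Sum.inl v}
      with hT_def
    have hT : T ⊆ Finset.univ.image c := by
      intro w hw
      simp only [hT_def, Finset.mem_union, Finset.mem_image, Finset.mem_univ, true_and,
        Finset.mem_singleton] at hw ⊢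
      rcases hw with ⟨t, rfl⟩ | rfl
      · obtain ⟨i, hi⟩ := hall_inr (t : ℕ) t.isLt
        exact ⟨i, hi⟩
      · exact ⟨j, hv⟩
    have hdisj : Disjoint
        ((Finset.univ.image (fun t : Fin (g - 1) => (Sum.inr t : V ⊕ Fin (g - 1)))))
        ({Sum.inl v} : Finset (V ⊕ Fin (g - 1))) := by
      simp
    have hcard : T.card = g := by
      rw [hT_def, Finset.card_union_of_disjoint hdisj,
        Finset.card_image_of_injective _ Sum.inr_injective, Finset.card_univ,
        Fintype.card_fin, Finset.card_singleton]
      omega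
    have hle : T.card ≤ (Finset.univ.image c).card := Finset.card_le_card hT
    rw [Finset.card_image_of_injective _ hinj, Finset.card_univ, Fintype.card_fin] at hle
    omega

lemma fvs_extend {V : Type*} [DecidableEq V] (A : V → V → Prop) (g : ℕ) (x y : V)
    (hg : 3 ≤ g) (F₀ : Finset V) (hF₀ : FeedbackVertexSet A (↑F₀ : Set V)) :
    FeedbackVertexSet (ExtendArcs A g x y)
      (↑(F₀.image Sum.inl ∪ {Sum.inr (⟨0, by omega⟩ : Fin (g - 1))}) :
        Set (V ⊕ Fin (g - 1))) := by
  set F₁ : Finset (V ⊕ Fin (g - 1)) :=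
    F₀.image Sum.inl ∪ {Sum.inr (⟨0, by omega⟩ : Fin (g - 1))} with hF₁def
  have hmem_inl : ∀ u : V, (Sum.inl u : V ⊕ Fin (g - 1)) ∈ F₁ ↔ u ∈ F₀ := by
    intro u; simp [hF₁def]
  have hmem_inr0 : (Sum.inr (⟨0, by omega⟩ : Fin (g - 1)) : V ⊕ Fin (g - 1)) ∈ F₁ := by
    simp [hF₁def]
  set μ : V ⊕ Fin (g - 1) → ℕ := Sum.elim (fun _ => g) Fin.val with hμdef
  set R : (V ⊕ Fin (g - 1)) → (V ⊕ Fin (g - 1)) → Prop := fun a b =>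
    a ∈ (↑F₁ : Set (V ⊕ Fin (g - 1)))ᶜ ∧ b ∈ (↑F₁ : Set (V ⊕ Fin (g - 1)))ᶜ ∧
      ExtendArcs A g x y a b with hRdef
  set R' : V → V → Prop := fun a b =>
    a ∈ (↑F₀ : Set V)ᶜ ∧ b ∈ (↑F₀ : Set V)ᶜ ∧ A a b with hR'def
  have hstep : ∀ a b, R a b →
      ((∃ u w, a = Sum.inl u ∧ b = Sum.inl w ∧ R' u w) ∨ μ a < μ b) ∧ μ a ≤ μ b := by
    rintro (u | i) (w | j) ⟨ha, hb, hab⟩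
    · refine ⟨Or.inl ⟨u, w, rfl, rfl, ?_, ?_, hab⟩, le_refl _⟩
      · exact fun h => ha ((hmem_inl u).2 h)
      · exact fun h => hb ((hmem_inl w).2 h)
    · exfalso
      apply hb
      have : j = ⟨0, by omega⟩ := Fin.ext hab.2
      rw [this]
      exact hmem_inr0
    · have hlt : μ (Sum.inr i) < μ (Sum.inl w) := by
        simp only [hμdef, Sum.elim_inl, Sum.elim_inr]
        have := i.isLt
        omega
      exact ⟨Or.inr hlt, le_of_lt hlt⟩
    · have hlt : μ (Sum.inr i) < μ (Sum.inr j) := by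
        simp only [hμdef, Sum.elim_inr]
        have : (j : ℕ) = (i : ℕ) + 1 := hab
        omega
      exact ⟨Or.inr hlt, le_of_lt hlt⟩
  have key : ∀ a b, Relation.TransGen R a b →
      (∃ u w, a = Sum.inl u ∧ b = Sum.inl w ∧ Relation.TransGen R' u w) ∨ μ a < μ b := by
    intro a b h
    induction h with
    | single h1 =>
      rcases (hstep _ _ h1).1 with ⟨u, w, rfl, rfl, h'⟩ | hlt
      · exact Or.inl ⟨u, w, rfl, rfl, Relation.TransGen.single h'⟩
      · exact Or.inr hlt
    | tail h1 h2 ih =>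
      rcases ih with ⟨u, w, rfl, hb, htg⟩ | hlt
      · subst hb
        rcases (hstep _ _ h2).1 with ⟨u₂, w₂, hbeq, rfl, h'⟩ | hlt2
        · obtain rfl : w = u₂ := Sum.inl.inj hbeq
          exact Or.inl ⟨u, w₂, rfl, rfl, htg.tail h'⟩
        · exact Or.inr hlt2
      · exact Or.inr (lt_of_lt_of_le hlt (hstep _ _ h2).2)
  intro w hw
  rcases key w w hw with ⟨u, w', h1, h2, htg⟩ | hlt
  · rw [h1] at h2
    obtain rfl := Sum.inl.inj h2
    exact hF₀ u htg
  · exact absurd hlt (lt_irrefl _)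


/-- Inductive step: if `D` is a loopless digraph all of whose directed cycles
have length at least `g`, with minimum feedback vertex set of size `f ≥ 1`, and
with two distinct vertices `x`, `y` not both in any feedback vertex set of size
`f`, then the extended digraph `D'` has all directed cycles of length at least
`g`, minimum feedback vertex set of size exactly `f + 1`, and no feedback
vertex set of size `f + 1` contains two distinct new vertices. -/
theorem extend_digraph_step {V : Type*} [Fintype V]
    (A : V → V → Prop) (g f : ℕ) (hg : 3 ≤ g) (hf : 1 ≤ f)
    (hirr : Irreflexive A)
    (hgirth : ∀ (m : ℕ) (c : Fin m → V), IsDicycle A c → g ≤ m)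
    (hex : ∃ F : Finset V, FeedbackVertexSet A (↑F : Set V) ∧ F.card = f)
    (hmin : ∀ F : Finset V, FeedbackVertexSet A (↑F : Set V) → f ≤ F.card)
    (x y : V) (hxy : x ≠ y)
    (hnotboth : ∀ F : Finset V, FeedbackVertexSet A (↑F : Set V) → F.card = f →
      ¬ (x ∈ F ∧ y ∈ F)) :
    (∀ (m : ℕ) (c : Fin m → V ⊕ Fin (g - 1)), IsDicycle (ExtendArcs A g x y) c → g ≤ m) ∧
    (∃ F : Finset (V ⊕ Fin (g - 1)),
      FeedbackVertexSet (ExtendArcs A g x y) (↑F : Set (V ⊕ Fin (g - 1))) ∧ F.card = f + 1) ∧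
    (∀ F : Finset (V ⊕ Fin (g - 1)),
      FeedbackVertexSet (ExtendArcs A g x y) (↑F : Set (V ⊕ Fin (g - 1))) → f + 1 ≤ F.card) ∧
    (∀ F : Finset (V ⊕ Fin (g - 1)),
      FeedbackVertexSet (ExtendArcs A g x y) (↑F : Set (V ⊕ Fin (g - 1))) → F.card = f + 1 →
        ∀ i j : Fin (g - 1), i ≠ j → ¬ (Sum.inr i ∈ F ∧ Sum.inr j ∈ F)) := by
  classical
  obtain ⟨F₀, hF₀, hF₀card⟩ := hex
  -- the restricted finset of an FVS of the extension is an FVS of the base digraph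
  have hres : ∀ F' : Finset (V ⊕ Fin (g - 1)),
      FeedbackVertexSet (ExtendArcs A g x y) (↑F' : Set (V ⊕ Fin (g - 1))) →
      FeedbackVertexSet A (↑(Finset.univ.filter (fun v : V => Sum.inl v ∈ F')) : Set V) := by
    intro F' hF'
    have h := fvs_restrict A g x y (↑F') hF'
    have hset : (↑(Finset.univ.filter (fun v : V => Sum.inl v ∈ F')) : Set V) =
        {v | Sum.inl v ∈ (↑F' : Set (V ⊕ Fin (g - 1)))} := by
      ext v; simp
    rw [hset]
    exact h
  refine ⟨girth_extend A g x y hg hgirth, ?_, ?_, ?_⟩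
  · refine ⟨F₀.image Sum.inl ∪ {Sum.inr (⟨0, by omega⟩ : Fin (g - 1))},
      fvs_extend A g x y hg F₀ hF₀, ?_⟩
    rw [Finset.card_union_of_disjoint (by simp),
      Finset.card_image_of_injective _ Sum.inl_injective, Finset.card_singleton, hF₀card]
  · -- lower bound f + 1
    intro F' hF'
    set Fres : Finset V := Finset.univ.filter (fun v : V => Sum.inl v ∈ F') with hFresdef
    have hFresFVS : FeedbackVertexSet A (↑Fres : Set V) := hres F' hF'
    have hf_le : f ≤ Fres.card := hmin Fres hFresFVS
    by_cases hinr : ∃ t : Fin (g - 1), Sum.inr t ∈ F'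
    · obtain ⟨t, ht⟩ := hinr
      have hsub : Fres.image Sum.inl ∪ {Sum.inr t} ⊆ F' := by
        intro w hw
        simp only [Finset.mem_union, Finset.mem_image, Finset.mem_singleton, hFresdef,
          Finset.mem_filter, Finset.mem_univ, true_and] at hw
        rcases hw with ⟨v, hv, rfl⟩ | rfl
        · exact hv
        · exact ht
      have hcard : (Fres.image Sum.inl ∪ {Sum.inr t}).card = Fres.card + 1 := by
        rw [Finset.card_union_of_disjoint (by simp),
          Finset.card_image_of_injective _ Sum.inl_injective, Finset.card_singleton]
      have := Finset.card_le_card hsub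
      omega
    · push_neg at hinr
      have hx' : Sum.inl x ∈ F' := by
        by_contra hx'
        exact hit_gadget A g x y hg x (Or.inl rfl) F' hF' hx' hinr
      have hy' : Sum.inl y ∈ F' := by
        by_contra hy'
        exact hit_gadget A g x y hg y (Or.inr rfl) F' hF' hy' hinr
      have hFeq : F' = Fres.image Sum.inl := by
        ext w
        cases w with
        | inl v => simp [hFresdef]
        | inr t => simp [hinr t]
      have hcardeq : F'.card = Fres.card := by
        rw [hFeq, Finset.card_image_of_injective _ Sum.inl_injective]
      have hne : Fres.card ≠ f := by
        intro hcf
        exact hnotboth Fres hFresFVS hcf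
          ⟨by simp [hFresdef, hx'], by simp [hFresdef, hy']⟩
      omega
  · -- no two new vertices in a minimum FVS
    rintro F' hF' hcard i j hij ⟨hi, hj⟩
    set Fres : Finset V := Finset.univ.filter (fun v : V => Sum.inl v ∈ F') with hFresdef
    have hFresFVS : FeedbackVertexSet A (↑Fres : Set V) := hres F' hF'
    have hf_le : f ≤ Fres.card := hmin Fres hFresFVS
    have hsub : Fres.image Sum.inl ∪ {Sum.inr i, Sum.inr j} ⊆ F' := by
      intro w hw
      simp only [Finset.mem_union, Finset.mem_image, Finset.mem_insert, Finset.mem_singleton,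
        hFresdef, Finset.mem_filter, Finset.mem_univ, true_and] at hw
      rcases hw with ⟨v, hv, rfl⟩ | rfl | rfl
      · exact hv
      · exact hi
      · exact hj
    have hcard2 : (Fres.image Sum.inl ∪ {Sum.inr i, Sum.inr j}).card = Fres.card + 2 := by
      rw [Finset.card_union_of_disjoint (by simp),
        Finset.card_image_of_injective _ Sum.inl_injective,
        Finset.card_pair (fun h => hij (Sum.inr_injective h))]
    have := Finset.card_le_card hsub
    omega
end
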